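/- arXiv:2302.10498 — 2 statements merged into one kernel-verified Lean document; each statement's English description precedes it below -/
import Mathlib

section
/- (Lemma 1: uniform upper bound on the predicted Kalman covariances.) Let P⁻_k be the Kalman predicted covariance sequence with initial positive semidefinite matrix P⁻_0, and let P_∞ be a steady-state covariance. If P⁻_0 ⪯ P_∞, then P⁻_k ⪯ P_∞ for all k ≥ 0. -/
open Matrix

/-- The one-step Riccati map of the Kalman predicted covariances,
`f(S) = A (S − S Cᵀ (C S Cᵀ + R)⁻¹ C S) Aᵀ + Q`. -/
noncomputable def riccatiMap {nx ny : ℕ}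
    (A Q : Matrix (Fin nx) (Fin nx) ℝ)
    (C : Matrix (Fin ny) (Fin nx) ℝ) (R : Matrix (Fin ny) (Fin ny) ℝ)
    (S : Matrix (Fin nx) (Fin nx) ℝ) : Matrix (Fin nx) (Fin nx) ℝ :=
  A * (S - S * Cᵀ * (C * S * Cᵀ + R)⁻¹ * (C * S)) * Aᵀ + Q



lemma psd_conj {m n : ℕ} {X : Matrix (Fin n) (Fin n) ℝ} (hX : X.PosSemidef)
    (B : Matrix (Fin m) (Fin n) ℝ) : (B * X * Bᵀ).PosSemidef := by
  have := hX.mul_mul_conjTranspose_same B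
  rwa [conjTranspose_eq_transpose_of_trivial] at this

lemma riccati_key {nx ny : ℕ} (S : Matrix (Fin nx) (Fin nx) ℝ)
    (C : Matrix (Fin ny) (Fin nx) ℝ) (R M N : Matrix (Fin ny) (Fin ny) ℝ)
    (K : Matrix (Fin nx) (Fin ny) ℝ)
    (hS : Sᵀ = S) (hN : Nᵀ = N)
    (hMN : M * N = 1) (hNM : N * M = 1)
    (hMdef : C * S * Cᵀ + R = M) :
    (1 - K * C) * S * (1 - K * C)ᵀ + K * R * Kᵀ
      = (S - S * Cᵀ * N * (C * S)) + (K - S * Cᵀ * N) * M * (K - S * Cᵀ * N)ᵀ := by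
  have hR : R = M - C * S * Cᵀ := by rw [← hMdef]; abel
  have c1 : ∀ (X : Matrix (Fin ny) (Fin nx) ℝ), M * (N * X) = X := fun X => by
    rw [← Matrix.mul_assoc, hMN, Matrix.one_mul]
  have c2 : ∀ (X : Matrix (Fin ny) (Fin nx) ℝ), N * (M * X) = X := fun X => by
    rw [← Matrix.mul_assoc, hNM, Matrix.one_mul]
  subst hR
  simp only [Matrix.transpose_sub, Matrix.transpose_mul, Matrix.transpose_one, hS, hN,
    Matrix.transpose_transpose, Matrix.mul_sub, Matrix.sub_mul, Matrix.mul_one,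
    Matrix.one_mul, Matrix.mul_assoc, c1, c2]
  abel

/-- Setup facts for `M = C S Cᵀ + R` when `S` is PSD and `R` is posdef. -/
lemma riccati_M_facts {nx ny : ℕ} {S : Matrix (Fin nx) (Fin nx) ℝ}
    {C : Matrix (Fin ny) (Fin nx) ℝ} {R : Matrix (Fin ny) (Fin ny) ℝ}
    (hS : S.PosSemidef) (hR : R.PosDef) :
    (C * S * Cᵀ + R) * (C * S * Cᵀ + R)⁻¹ = 1 ∧
    (C * S * Cᵀ + R)⁻¹ * (C * S * Cᵀ + R) = 1 ∧
    ((C * S * Cᵀ + R)⁻¹)ᵀ = (C * S * Cᵀ + R)⁻¹ ∧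
    (C * S * Cᵀ + R).PosDef := by
  have hCSC : (C * S * Cᵀ).PosSemidef := by
    have := hS.mul_mul_conjTranspose_same C
    rwa [conjTranspose_eq_transpose_of_trivial] at this
  have hM : (C * S * Cᵀ + R).PosDef := Matrix.PosDef.posSemidef_add hCSC hR
  have hdet : IsUnit (C * S * Cᵀ + R).det := (Matrix.isUnit_iff_isUnit_det _).mp hM.isUnit
  have hMsym : (C * S * Cᵀ + R)ᵀ = C * S * Cᵀ + R := by
    have := hM.isHermitian
    rwa [← conjTranspose_eq_transpose_of_trivial]
  refine ⟨Matrix.mul_nonsing_inv _ hdet, Matrix.nonsing_inv_mul _ hdet, ?_, hM⟩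
  rw [Matrix.transpose_nonsing_inv, hMsym]

/-- **Lemma 1.** If the Kalman predicted covariance sequence `P⁻`
starts with `P⁻_0 ⪯ P_∞`, where `P_∞` is a steady-state covariance, then
`P⁻_k ⪯ P_∞` for all `k ≥ 0`. -/
theorem kalman_predicted_cov_uniformly_bounded {nx ny : ℕ}
    (A : Matrix (Fin nx) (Fin nx) ℝ) (C : Matrix (Fin ny) (Fin nx) ℝ)
    (Q : Matrix (Fin nx) (Fin nx) ℝ) (R : Matrix (Fin ny) (Fin ny) ℝ)
    (hQ : Q.PosSemidef) (hR : R.PosDef)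
    (Pminus : ℕ → Matrix (Fin nx) (Fin nx) ℝ)
    (hP0 : (Pminus 0).PosSemidef)
    (hrec : ∀ k : ℕ, Pminus (k + 1) = riccatiMap A Q C R (Pminus k))
    (Pinf : Matrix (Fin nx) (Fin nx) ℝ)
    (hPinf : Pinf.PosSemidef)
    (hss : Pinf = riccatiMap A Q C R Pinf)
    (hinit : (Pinf - Pminus 0).PosSemidef) :
    ∀ k : ℕ, (Pinf - Pminus k).PosSemidef := by
  -- facts for Pinf
  obtain ⟨hMNinf, hNMinf, hNsyminf, hMinf⟩ := riccati_M_facts hPinf hR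
  set Ninf := (C * Pinf * Cᵀ + R)⁻¹ with hNinfdef
  set Kinf := Pinf * Cᵀ * Ninf with hKinfdef
  have hPinfsym : Pinfᵀ = Pinf := by
    have := hPinf.isHermitian
    rwa [← conjTranspose_eq_transpose_of_trivial]
  -- rInf = gain form at Kinf
  have e2 := riccati_key Pinf C R (C * Pinf * Cᵀ + R) Ninf Kinf hPinfsym hNsyminf hMNinf hNMinf rfl
  rw [sub_self, Matrix.zero_mul, Matrix.zero_mul, add_zero] at e2
  suffices h : ∀ k, (Pminus k).PosSemidef ∧ (Pinf - Pminus k).PosSemidef by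
    exact fun k => (h k).2
  intro k
  induction k with
  | zero => exact ⟨hP0, hinit⟩
  | succ k ih =>
    obtain ⟨hPk, hdk⟩ := ih
    set P := Pminus k with hPdef
    obtain ⟨hMN, hNM, hNsym, hMP⟩ := riccati_M_facts hPk hR
    set N := (C * P * Cᵀ + R)⁻¹ with hNdef
    have hPsym : Pᵀ = P := by
      have := hPk.isHermitian
      rwa [← conjTranspose_eq_transpose_of_trivial]
    -- optimal gain for P: rP is PSD
    have e3 := riccati_key P C R (C * P * Cᵀ + R) N (P * Cᵀ * N) hPsym hNsym hMN hNM rfl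
    rw [sub_self, Matrix.zero_mul, Matrix.zero_mul, add_zero] at e3
    have hrP : (P - P * Cᵀ * N * (C * P)).PosSemidef := by
      rw [← e3]
      exact (psd_conj hPk _).add (psd_conj hR.posSemidef _)
    -- suboptimal gain Kinf for P
    have e1 := riccati_key P C R (C * P * Cᵀ + R) N Kinf hPsym hNsym hMN hNM rfl
    -- rInf - rP is PSD
    have hkey : ((Pinf - Pinf * Cᵀ * Ninf * (C * Pinf)) - (P - P * Cᵀ * N * (C * P))).PosSemidef := by
      have : (Pinf - Pinf * Cᵀ * Ninf * (C * Pinf)) - (P - P * Cᵀ * N * (C * P))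
          = (1 - Kinf * C) * (Pinf - P) * (1 - Kinf * C)ᵀ
            + (Kinf - P * Cᵀ * N) * (C * P * Cᵀ + R) * (Kinf - P * Cᵀ * N)ᵀ := by
        rw [← e2]
        have e1' : (P - P * Cᵀ * N * (C * P))
            = (1 - Kinf * C) * P * (1 - Kinf * C)ᵀ + Kinf * R * Kinfᵀ
              - (Kinf - P * Cᵀ * N) * (C * P * Cᵀ + R) * (Kinf - P * Cᵀ * N)ᵀ := by
          rw [e1]; abel
        rw [e1']
        simp only [Matrix.mul_sub, Matrix.sub_mul]
        abel
      rw [this]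
      exact (psd_conj hdk _).add (psd_conj hMP.posSemidef _)
    refine ⟨?_, ?_⟩
    · rw [hrec k, riccatiMap, ← hPdef, ← hNdef]
      exact (psd_conj hrP A).add hQ
    · have hstep : Pinf - Pminus (k + 1)
          = A * ((Pinf - Pinf * Cᵀ * Ninf * (C * Pinf)) - (P - P * Cᵀ * N * (C * P))) * Aᵀ := by
        conv_lhs => rw [hss, hrec k, riccatiMap, riccatiMap, ← hPdef, ← hNdef, ← hNinfdef]
        simp only [Matrix.mul_sub, Matrix.sub_mul]
        abel
      rw [hstep]
      exact psd_conj hkey A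
end

section
/- (Lemma 3: uniform upper bound on the covariance of the estimator disturbance.) Let P⁻_k be the Kalman predicted covariance sequence with positive semidefinite initial matrix P⁻_0 ⪯ P_∞, where P_∞ is a steady-state covariance. Define the Kalman gains L_{k+1} = P⁻_{k+1} Cᵀ (C P⁻_{k+1} Cᵀ + R)⁻¹ and the matrices Φ_k = L_{k+1} (C P⁻_{k+1} Cᵀ + R) L_{k+1}ᵀ. Then for all k ≥ 0, Φ_k ⪯ P_∞. -/
set_option maxHeartbeats 1000000


open Matrix

lemma expand_aux {nx ny : ℕ}
    (A Q : Matrix (Fin nx) (Fin nx) ℝ)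
    (C : Matrix (Fin ny) (Fin nx) ℝ) (R : Matrix (Fin ny) (Fin ny) ℝ)
    (P : Matrix (Fin nx) (Fin nx) ℝ) (L : Matrix (Fin nx) (Fin ny) ℝ)
    (S W : Matrix (Fin ny) (Fin ny) ℝ)
    (hP : Pᵀ = P) (hW : Wᵀ = W)
    (hS : S = C * P * Cᵀ + R)
    (h1 : S * W = 1) (h2 : W * S = 1) :
    (A - L * C) * P * (A - L * C)ᵀ + L * R * Lᵀ + Q
      = (A * (P - P * Cᵀ * W * (C * P)) * Aᵀ + Q)
        + (L - A * P * Cᵀ * W) * S * (L - A * P * Cᵀ * W)ᵀ := by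
  have h1' : ∀ X : Matrix (Fin ny) (Fin nx) ℝ, S * (W * X) = X := by
    intro X; rw [← Matrix.mul_assoc, h1, Matrix.one_mul]
  have h2' : ∀ X : Matrix (Fin ny) (Fin nx) ℝ, W * (S * X) = X := by
    intro X; rw [← Matrix.mul_assoc, h2, Matrix.one_mul]
  have hR : R = S - C * P * Cᵀ := by rw [hS, add_sub_cancel_left]
  simp only [transpose_sub, transpose_mul, transpose_transpose, hP, hW]
  rw [hR]
  simp only [Matrix.mul_sub, Matrix.sub_mul, Matrix.mul_assoc, h1', h2', h1, h2, Matrix.mul_one]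
  abel

lemma psd_congr {nx m : ℕ} {P : Matrix (Fin m) (Fin m) ℝ} (hP : P.PosSemidef)
    (B : Matrix (Fin nx) (Fin m) ℝ) : (B * P * Bᵀ).PosSemidef := by
  simpa using hP.mul_mul_conjTranspose_same B

lemma psd_symm {m : ℕ} {P : Matrix (Fin m) (Fin m) ℝ} (hP : P.PosSemidef) : Pᵀ = P := by
  simpa using hP.1.eq

/-- **Lemma 3.** If the Kalman predicted covariance sequence `P⁻`
starts with `P⁻_0 ⪯ P_∞`, where `P_∞` is a steady-state covariance, then with
Kalman gains `L_{k+1} = P⁻_{k+1} Cᵀ (C P⁻_{k+1} Cᵀ + R)⁻¹`, the estimator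
disturbance covariances `Φ_k = L_{k+1} (C P⁻_{k+1} Cᵀ + R) L_{k+1}ᵀ` satisfy
`Φ_k ⪯ P_∞` for all `k ≥ 0`. -/
theorem kalman_disturbance_cov_uniformly_bounded {nx ny : ℕ}
    (A : Matrix (Fin nx) (Fin nx) ℝ) (C : Matrix (Fin ny) (Fin nx) ℝ)
    (Q : Matrix (Fin nx) (Fin nx) ℝ) (R : Matrix (Fin ny) (Fin ny) ℝ)
    (hQ : Q.PosSemidef) (hR : R.PosDef)
    (Pminus : ℕ → Matrix (Fin nx) (Fin nx) ℝ)
    (hP0 : (Pminus 0).PosSemidef)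
    (hrec : ∀ k : ℕ, Pminus (k + 1) = riccatiMap A Q C R (Pminus k))
    (Pinf : Matrix (Fin nx) (Fin nx) ℝ)
    (hPinf : Pinf.PosSemidef)
    (hss : Pinf = riccatiMap A Q C R Pinf)
    (hinit : (Pinf - Pminus 0).PosSemidef)
    (L : ℕ → Matrix (Fin nx) (Fin ny) ℝ)
    (hL : ∀ k : ℕ, L (k + 1) =
      Pminus (k + 1) * Cᵀ * (C * Pminus (k + 1) * Cᵀ + R)⁻¹)
    (Φ : ℕ → Matrix (Fin nx) (Fin nx) ℝ)
    (hΦ : ∀ k : ℕ, Φ k =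
      L (k + 1) * (C * Pminus (k + 1) * Cᵀ + R) * (L (k + 1))ᵀ) :
    ∀ k : ℕ, (Pinf - Φ k).PosSemidef := by
  -- notation
  set f := riccatiMap A Q C R with hf
  -- basic facts about S P := C P Cᵀ + R for psd P
  have hSpd : ∀ {P : Matrix (Fin nx) (Fin nx) ℝ}, P.PosSemidef →
      (C * P * Cᵀ + R).PosDef := by
    intro P hP
    exact Matrix.PosDef.posSemidef_add (psd_congr hP C) hR
  have hS1 : ∀ {P : Matrix (Fin nx) (Fin nx) ℝ}, P.PosSemidef →
      (C * P * Cᵀ + R) * (C * P * Cᵀ + R)⁻¹ = 1 := by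
    intro P hP
    exact Matrix.mul_nonsing_inv _ (hSpd hP).det_pos.ne'.isUnit
  have hS2 : ∀ {P : Matrix (Fin nx) (Fin nx) ℝ}, P.PosSemidef →
      (C * P * Cᵀ + R)⁻¹ * (C * P * Cᵀ + R) = 1 := by
    intro P hP
    exact Matrix.nonsing_inv_mul _ (hSpd hP).det_pos.ne'.isUnit
  have hSinvSymm : ∀ {P : Matrix (Fin nx) (Fin nx) ℝ}, P.PosSemidef →
      ((C * P * Cᵀ + R)⁻¹)ᵀ = (C * P * Cᵀ + R)⁻¹ := by
    intro P hP
    rw [Matrix.transpose_nonsing_inv]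
    congr 1
    exact psd_symm (hSpd hP).posSemidef
  -- the main expansion specialised to `f`
  have key : ∀ (P : Matrix (Fin nx) (Fin nx) ℝ), P.PosSemidef →
      ∀ L' : Matrix (Fin nx) (Fin ny) ℝ,
      (A - L' * C) * P * (A - L' * C)ᵀ + L' * R * L'ᵀ + Q
        = f P + (L' - A * P * Cᵀ * (C * P * Cᵀ + R)⁻¹) * (C * P * Cᵀ + R)
            * (L' - A * P * Cᵀ * (C * P * Cᵀ + R)⁻¹)ᵀ := by
    intro P hP L'
    exact expand_aux A Q C R P L' _ _ (psd_symm hP) (hSinvSymm hP) rfl (hS1 hP) (hS2 hP)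
  -- f P written as positive combination
  have fdecomp : ∀ (P : Matrix (Fin nx) (Fin nx) ℝ), P.PosSemidef →
      f P = (A - (A * P * Cᵀ * (C * P * Cᵀ + R)⁻¹) * C) * P
              * (A - (A * P * Cᵀ * (C * P * Cᵀ + R)⁻¹) * C)ᵀ
            + (A * P * Cᵀ * (C * P * Cᵀ + R)⁻¹) * R * (A * P * Cᵀ * (C * P * Cᵀ + R)⁻¹)ᵀ
            + Q := by
    intro P hP
    have := key P hP (A * P * Cᵀ * (C * P * Cᵀ + R)⁻¹)
    rw [sub_self, Matrix.zero_mul, Matrix.zero_mul, add_zero] at this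
    exact this.symm
  have fpsd : ∀ (P : Matrix (Fin nx) (Fin nx) ℝ), P.PosSemidef → (f P).PosSemidef := by
    intro P hP
    rw [fdecomp P hP]
    exact ((psd_congr hP _).add (psd_congr hR.posSemidef _)).add hQ
  -- monotonicity-type inequality against the fixed point
  have fmono : ∀ (P : Matrix (Fin nx) (Fin nx) ℝ), P.PosSemidef →
      (Pinf - P).PosSemidef → (Pinf - f P).PosSemidef := by
    intro P hP hle
    set K := A * Pinf * Cᵀ * (C * Pinf * Cᵀ + R)⁻¹ with hK
    have h1 := fdecomp Pinf hPinf
    have h2 := key P hP K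
    have hPinf_eq : Pinf = (A - K * C) * Pinf * (A - K * C)ᵀ + K * R * Kᵀ + Q := by
      rw [← h1, ← hss]
    have hfP : f P = ((A - K * C) * P * (A - K * C)ᵀ + K * R * Kᵀ + Q)
        - (K - A * P * Cᵀ * (C * P * Cᵀ + R)⁻¹) * (C * P * Cᵀ + R)
            * (K - A * P * Cᵀ * (C * P * Cᵀ + R)⁻¹)ᵀ :=
      eq_sub_of_add_eq h2.symm
    have e1 : (A - K * C) * (Pinf - P) * (A - K * C)ᵀ
        = (A - K * C) * Pinf * (A - K * C)ᵀ - (A - K * C) * P * (A - K * C)ᵀ := by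
      rw [Matrix.mul_sub, Matrix.sub_mul]
    have heq : Pinf - f P
        = (A - K * C) * (Pinf - P) * (A - K * C)ᵀ
          + (K - A * P * Cᵀ * (C * P * Cᵀ + R)⁻¹) * (C * P * Cᵀ + R)
            * (K - A * P * Cᵀ * (C * P * Cᵀ + R)⁻¹)ᵀ := by
      rw [e1, hfP]
      conv_lhs => rw [hPinf_eq]
      abel
    rw [heq]
    exact (psd_congr hle _).add (psd_congr (hSpd hP).posSemidef _)
  -- induction: P_k psd and P_k ⪯ Pinf
  have hmain : ∀ k : ℕ, (Pminus k).PosSemidef ∧ (Pinf - Pminus k).PosSemidef := by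
    intro k
    induction k with
    | zero => exact ⟨hP0, hinit⟩
    | succ n ih =>
      rw [hrec n]
      exact ⟨fpsd _ ih.1, fmono _ ih.1 ih.2⟩
  -- per-step bound P_{k+1} - Φ_k psd
  intro k
  have hPk : (Pminus (k + 1)).PosSemidef := (hmain (k + 1)).1
  set P := Pminus (k + 1) with hPdef
  -- Φ k = P Cᵀ S⁻¹ (C P)
  have hΦeq : Φ k = P * Cᵀ * (C * P * Cᵀ + R)⁻¹ * (C * P) := by
    rw [hΦ k, hL k, ← hPdef]
    rw [transpose_mul, transpose_mul, hSinvSymm hPk, transpose_transpose, psd_symm hPk]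
    calc P * Cᵀ * (C * P * Cᵀ + R)⁻¹ * (C * P * Cᵀ + R) * ((C * P * Cᵀ + R)⁻¹ * (C * P))
        = P * Cᵀ * ((C * P * Cᵀ + R)⁻¹ * (C * P * Cᵀ + R))
            * ((C * P * Cᵀ + R)⁻¹ * (C * P)) := by
          rw [Matrix.mul_assoc (P * Cᵀ)]
      _ = P * Cᵀ * (C * P * Cᵀ + R)⁻¹ * (C * P) := by
          rw [hS2 hPk, Matrix.mul_one, ← Matrix.mul_assoc]
  have hstep : (P - Φ k).PosSemidef := by
    rw [hΦeq]
    have h := expand_aux 1 0 C R P (P * Cᵀ * (C * P * Cᵀ + R)⁻¹)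
      (C * P * Cᵀ + R) ((C * P * Cᵀ + R)⁻¹)
      (psd_symm hPk) (hSinvSymm hPk) rfl (hS1 hPk) (hS2 hPk)
    simp only [Matrix.one_mul, Matrix.mul_one, transpose_one, sub_self,
      Matrix.zero_mul, Matrix.mul_zero, add_zero] at h
    rw [← h]
    exact (psd_congr hPk _).add (psd_congr hR.posSemidef _)
  have := (hmain (k + 1)).2
  have : Pinf - Φ k = (Pinf - P) + (P - Φ k) := by abel
  rw [this]
  exact (hmain (k + 1)).2.add hstep
end
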